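/- Let f, g : (0,∞) → ℝ with f ∈ C² and f nonvanishing, and define f̃(s) := s^{-4}·f(1/s) and g̃(s) := s^{-4}·g(1/s) for s ∈ (0,∞). Then ψ_{f̃,g̃}(s) = s^{-2}·ψ_{f,g}(1/s) for all s ∈ (0,∞); consequently, ∫₀^∞ |ψ_{f̃,g̃}(s)| ds = ∫₀^∞ |ψ_{f,g}(x)| dx, so ψ_{f,g} ∈ L¹(0,∞) if and only if ψ_{f̃,g̃} ∈ L¹(0,∞). -/

import Mathlib

open Set Filter MeasureTheory
open scoped Topology

/-- `ψ_{f,g} = |f|^{-1/4} (-d²/dx² + g) |f|^{-1/4}`. -/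
noncomputable def psi (f g : ℝ → ℝ) (x : ℝ) : ℝ :=
  |f x| ^ (-(1 / 4 : ℝ)) *
    (-(deriv (deriv (fun t => |f t| ^ (-(1 / 4 : ℝ)))) x) +
      g x * |f x| ^ (-(1 / 4 : ℝ)))

lemma abs_rpow_eq_sq_rpow (f : ℝ → ℝ) :
    (fun t => |f t| ^ (-(1 / 4 : ℝ))) = fun t => ((f t) ^ 2) ^ (-(1/8 : ℝ)) := by
  funext t
  rw [← sq_abs, ← Real.rpow_natCast |f t| 2, ← Real.rpow_mul (abs_nonneg _)]
  norm_num

lemma contDiffOn_u (f : ℝ → ℝ) (hf : ContDiffOn ℝ 2 f (Ioi 0))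
    (hf0 : ∀ x ∈ Ioi (0:ℝ), f x ≠ 0) :
    ContDiffOn ℝ 2 (fun t => |f t| ^ (-(1 / 4 : ℝ))) (Ioi 0) := by
  rw [abs_rpow_eq_sq_rpow]
  intro x hx
  have h1 : ContDiffAt ℝ 2 f x := hf.contDiffAt (isOpen_Ioi.mem_nhds hx)
  have h2 : ContDiffAt ℝ 2 (fun t => (f t) ^ 2) x := h1.pow 2
  exact ((Real.contDiffAt_rpow_const_of_ne (pow_ne_zero 2 (hf0 x hx))).comp x h2).contDiffWithinAt

lemma hasDerivAt_of_contDiffOn_two {u : ℝ → ℝ} (hu : ContDiffOn ℝ 2 u (Ioi 0))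
    {x : ℝ} (hx : x ∈ Ioi (0:ℝ)) :
    HasDerivAt u (deriv u x) x ∧ HasDerivAt (deriv u) (deriv (deriv u) x) x := by
  constructor
  · exact ((hu.contDiffAt (isOpen_Ioi.mem_nhds hx)).differentiableAt
      (by norm_num)).hasDerivAt
  · have h1 : ContDiffOn ℝ 1 (deriv u) (Ioi 0) :=
      hu.deriv_of_isOpen isOpen_Ioi (by norm_num)
    exact ((h1.contDiffAt (isOpen_Ioi.mem_nhds hx)).differentiableAt one_ne_zero).hasDerivAt

lemma psi_pointwise (f g : ℝ → ℝ)
    (hf : ContDiffOn ℝ 2 f (Ioi 0))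
    (hf0 : ∀ x ∈ Ioi (0 : ℝ), f x ≠ 0)
    {s : ℝ} (hs : s ∈ Ioi (0:ℝ)) :
    psi (fun s => (s ^ 4)⁻¹ * f s⁻¹) (fun s => (s ^ 4)⁻¹ * g s⁻¹) s =
      (s ^ 2)⁻¹ * psi f g s⁻¹ := by
  have hs0 : (0:ℝ) < s := hs
  set u : ℝ → ℝ := fun t => |f t| ^ (-(1 / 4 : ℝ)) with hu_def
  have hu : ContDiffOn ℝ 2 u (Ioi 0) := contDiffOn_u f hf hf0
  set u1 : ℝ → ℝ := deriv u with hu1_def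
  set u2 : ℝ → ℝ := deriv u1 with hu2_def
  have hDu : ∀ x ∈ Ioi (0:ℝ), HasDerivAt u (u1 x) x :=
    fun x hx => (hasDerivAt_of_contDiffOn_two hu hx).1
  have hDu1 : ∀ x ∈ Ioi (0:ℝ), HasDerivAt u1 (u2 x) x :=
    fun x hx => (hasDerivAt_of_contDiffOn_two hu hx).2
  set v : ℝ → ℝ := fun t => |(t ^ 4)⁻¹ * f t⁻¹| ^ (-(1 / 4 : ℝ)) with hv_def
  set w : ℝ → ℝ := fun t => t * u t⁻¹ with hw_def
  set w1 : ℝ → ℝ := fun t => u t⁻¹ - t⁻¹ * u1 t⁻¹ with hw1_def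
  -- v = w on Ioi 0
  have hvw : EqOn v w (Ioi 0) := by
    intro t ht
    have ht0 : (0:ℝ) < t := ht
    have htp : (0:ℝ) < (t ^ 4)⁻¹ := inv_pos.2 (pow_pos ht0 4)
    have h1 : (t ^ 4)⁻¹ = t ^ (-(4:ℝ)) := by
      rw [← Real.rpow_natCast t 4, ← Real.rpow_neg ht0.le]
      norm_num
    have h2 : ((t ^ 4)⁻¹ : ℝ) ^ (-(1/4 : ℝ)) = t := by
      rw [h1, ← Real.rpow_mul ht0.le]
      norm_num
    simp only [hv_def, hw_def, hu_def]
    rw [abs_mul, abs_of_pos htp, Real.mul_rpow htp.le (abs_nonneg _)]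
    norm_num [h2]
  -- derivative of w
  have hDw : ∀ t ∈ Ioi (0:ℝ), HasDerivAt w (w1 t) t := by
    intro t ht
    have ht0 : (0:ℝ) < t := ht
    have hti : t⁻¹ ∈ Ioi (0:ℝ) := inv_pos.2 ht0
    have h1 : HasDerivAt (fun y : ℝ => y⁻¹) (-(t ^ 2)⁻¹) t := hasDerivAt_inv ht0.ne'
    have h3 : HasDerivAt (fun y => u y⁻¹) (u1 t⁻¹ * -(t ^ 2)⁻¹) t :=
      (hDu t⁻¹ hti).comp t h1
    have h4 : HasDerivAt w (1 * u t⁻¹ + t * (u1 t⁻¹ * -(t ^ 2)⁻¹)) t :=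
      (hasDerivAt_id t).mul h3
    convert h4 using 1
    simp only [hw1_def]
    field_simp
    ring
  -- derivative of w1
  have hDw1 : ∀ t ∈ Ioi (0:ℝ), HasDerivAt w1 ((t ^ 3)⁻¹ * u2 t⁻¹) t := by
    intro t ht
    have ht0 : (0:ℝ) < t := ht
    have hti : t⁻¹ ∈ Ioi (0:ℝ) := inv_pos.2 ht0
    have h1 : HasDerivAt (fun y : ℝ => y⁻¹) (-(t ^ 2)⁻¹) t := hasDerivAt_inv ht0.ne'
    have h3 : HasDerivAt (fun y => u y⁻¹) (u1 t⁻¹ * -(t ^ 2)⁻¹) t :=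
      (hDu t⁻¹ hti).comp t h1
    have h5 : HasDerivAt (fun y => u1 y⁻¹) (u2 t⁻¹ * -(t ^ 2)⁻¹) t :=
      (hDu1 t⁻¹ hti).comp t h1
    have h6 : HasDerivAt (fun y : ℝ => y⁻¹ * u1 y⁻¹)
        (-(t ^ 2)⁻¹ * u1 t⁻¹ + t⁻¹ * (u2 t⁻¹ * -(t ^ 2)⁻¹)) t := h1.mul h5
    have h7 := h3.sub h6
    exact h7.congr_deriv (by ring)
  -- deriv v = w1 on Ioi 0
  have hderiv_v : EqOn (deriv v) w1 (Ioi 0) := by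
    intro t ht
    have hev : v =ᶠ[𝓝 t] w := eventuallyEq_of_mem (isOpen_Ioi.mem_nhds ht) hvw
    rw [hev.deriv_eq]
    exact (hDw t ht).deriv
  have hdd : deriv (deriv v) s = (s ^ 3)⁻¹ * u2 s⁻¹ := by
    have hev : deriv v =ᶠ[𝓝 s] w1 := eventuallyEq_of_mem (isOpen_Ioi.mem_nhds hs) hderiv_v
    rw [hev.deriv_eq]
    exact (hDw1 s hs).deriv
  have hvs : v s = s * u s⁻¹ := hvw hs
  simp only [psi]
  rw [show (fun t => |(t ^ 4)⁻¹ * f t⁻¹| ^ (-(1 / 4 : ℝ))) = v from rfl]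
  rw [hdd]
  rw [show |(s ^ 4)⁻¹ * f s⁻¹| ^ (-(1 / 4 : ℝ)) = v s from rfl, hvs]
  rw [show deriv (deriv fun t => |f t| ^ (-(1 / 4 : ℝ))) s⁻¹ = u2 s⁻¹ from rfl]
  rw [show |f s⁻¹| ^ (-(1 / 4 : ℝ)) = u s⁻¹ from rfl]
  field_simp

/-- With `f̃(s) = s⁻⁴ f(1/s)` and `g̃(s) = s⁻⁴ g(1/s)`, one has
`ψ_{f̃,g̃}(s) = s⁻² ψ_{f,g}(1/s)` on `(0,∞)`; consequently
`∫₀^∞ |ψ_{f̃,g̃}| = ∫₀^∞ |ψ_{f,g}|` and `ψ_{f,g} ∈ L¹(0,∞)` iff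
`ψ_{f̃,g̃} ∈ L¹(0,∞)`. -/
theorem psi_inversion
    (f g : ℝ → ℝ)
    (hf : ContDiffOn ℝ 2 f (Ioi 0))
    (hf0 : ∀ x ∈ Ioi (0 : ℝ), f x ≠ 0) :
    (∀ s ∈ Ioi (0 : ℝ),
      psi (fun s => (s ^ 4)⁻¹ * f s⁻¹) (fun s => (s ^ 4)⁻¹ * g s⁻¹) s =
        (s ^ 2)⁻¹ * psi f g s⁻¹) ∧
    ((∫ s in Ioi (0 : ℝ),
        |psi (fun s => (s ^ 4)⁻¹ * f s⁻¹) (fun s => (s ^ 4)⁻¹ * g s⁻¹) s|) =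
      ∫ x in Ioi (0 : ℝ), |psi f g x|) ∧
    (IntegrableOn (psi f g) (Ioi (0 : ℝ)) ↔
      IntegrableOn (psi (fun s => (s ^ 4)⁻¹ * f s⁻¹) (fun s => (s ^ 4)⁻¹ * g s⁻¹))
        (Ioi (0 : ℝ))) := by
  have hpt : ∀ s ∈ Ioi (0 : ℝ),
      psi (fun s => (s ^ 4)⁻¹ * f s⁻¹) (fun s => (s ^ 4)⁻¹ * g s⁻¹) s =
        (s ^ 2)⁻¹ * psi f g s⁻¹ := fun s hs => psi_pointwise f g hf hf0 hs
  have himg : (fun x : ℝ => x⁻¹) '' Ioi 0 = Ioi 0 := by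
    ext y
    constructor
    · rintro ⟨x, hx, rfl⟩
      exact inv_pos.2 (mem_Ioi.1 hx)
    · intro hy
      exact ⟨y⁻¹, mem_Ioi.2 (inv_pos.2 (mem_Ioi.1 hy)), inv_inv y⟩
  have hderiv : ∀ x ∈ Ioi (0:ℝ),
      HasDerivWithinAt (fun x : ℝ => x⁻¹) (-(x ^ 2)⁻¹) (Ioi 0) x :=
    fun x hx => (hasDerivAt_inv (ne_of_gt hx)).hasDerivWithinAt
  have hinj : InjOn (fun x : ℝ => x⁻¹) (Ioi 0) := inv_injective.injOn
  refine ⟨hpt, ?_, ?_⟩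
  · have h1 : (∫ x in Ioi (0:ℝ), |psi f g x|) =
        ∫ x in Ioi (0:ℝ), |(-(x ^ 2)⁻¹)| • |psi f g x⁻¹| := by
      conv_lhs => rw [← himg]
      exact integral_image_eq_integral_abs_deriv_smul measurableSet_Ioi hderiv hinj
        (fun x => |psi f g x|)
    rw [h1]
    apply setIntegral_congr_fun measurableSet_Ioi
    intro x hx
    have hx0 : (0:ℝ) < x := hx
    show |psi (fun s => (s ^ 4)⁻¹ * f s⁻¹) (fun s => (s ^ 4)⁻¹ * g s⁻¹) x| =
      |(-(x ^ 2)⁻¹)| • |psi f g x⁻¹|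
    rw [hpt x hx, smul_eq_mul, abs_mul, abs_neg]
  · have h1 : IntegrableOn (psi f g) (Ioi (0:ℝ)) ↔
        IntegrableOn (fun x => |(-(x ^ 2)⁻¹)| • psi f g x⁻¹) (Ioi (0:ℝ)) := by
      conv_lhs => rw [← himg]
      exact integrableOn_image_iff_integrableOn_abs_deriv_smul measurableSet_Ioi hderiv hinj
        (psi f g)
    rw [h1]
    apply integrableOn_congr_fun _ measurableSet_Ioi
    intro x hx
    have hx0 : (0:ℝ) < x := hx
    show |(-(x ^ 2)⁻¹)| • psi f g x⁻¹ =
      psi (fun s => (s ^ 4)⁻¹ * f s⁻¹) (fun s => (s ^ 4)⁻¹ * g s⁻¹) x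
    rw [hpt x hx, smul_eq_mul, abs_neg, abs_inv, abs_of_pos (pow_pos hx0 2)]
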